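/- Simplest-scenario noncontextuality no-go theorem: there do not exist a finite set Λ, probability distributions μ_θ on Λ for θ ∈ {π/4, 3π/4, 5π/4, 7π/4}, and functions ξ_Z, ξ_X : Λ → {0,1} such that all of the following hold: (1) Σ_{λ∈Λ} μ_θ(λ)·ξ_Z(λ) = cos²(θ/2) for each of the four values of θ; (2) Σ_{λ∈Λ} μ_θ(λ)·ξ_X(λ) = (1 + sin θ)/2 for each of the four values of θ; (3) (1/2)μ_{π/4} + (1/2)μ_{5π/4} = (1/2)μ_{3π/4} + (1/2)μ_{7π/4} as functions on Λ. -/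
import Mathlib


/-- The four preparation angles `π/4, 3π/4, 5π/4, 7π/4` of the simplest
nontrivial scenario. -/
noncomputable def θv : Fin 4 → ℝ :=
  ![Real.pi / 4, 3 * Real.pi / 4, 5 * Real.pi / 4, 7 * Real.pi / 4]

/-- Simplest-scenario noncontextuality no-go theorem: there is no
preparation-noncontextual, outcome-deterministic ontological model over a
finite ontic state space reproducing the quantum statistics of the four
preparations `ψ_θ` with respect to the Pauli `Z` and `X` measurements. -/
theorem no_noncontextual_model_simplest_scenario :
    ¬ ∃ (n : ℕ) (μ : Fin 4 → Fin n → ℝ) (ξZ ξX : Fin n → ℝ),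
        -- each μ_θ is a probability distribution on Λ = Fin n
        (∀ i l, 0 ≤ μ i l) ∧
        (∀ i, ∑ l : Fin n, μ i l = 1) ∧
        -- ξ_Z, ξ_X : Λ → {0,1}
        (∀ l, ξZ l = 0 ∨ ξZ l = 1) ∧
        (∀ l, ξX l = 0 ∨ ξX l = 1) ∧
        -- (1) the model reproduces the Z-measurement statistics
        (∀ i, ∑ l : Fin n, μ i l * ξZ l = Real.cos (θv i / 2) ^ 2) ∧
        -- (2) the model reproduces the X-measurement statistics
        (∀ i, ∑ l : Fin n, μ i l * ξX l = (1 + Real.sin (θv i)) / 2) ∧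
        -- (3) preparation noncontextuality:
        -- (1/2)μ_{π/4} + (1/2)μ_{5π/4} = (1/2)μ_{3π/4} + (1/2)μ_{7π/4}
        (∀ l, (1 / 2) * μ 0 l + (1 / 2) * μ 2 l
            = (1 / 2) * μ 1 l + (1 / 2) * μ 3 l) := by
  rintro ⟨n, μ, ξZ, ξX, hpos, hsum, hZ01, hX01, hZ, hX, hnc⟩
  have hs2 : (Real.sqrt 2) ^ 2 = 2 := Real.sq_sqrt (by norm_num)
  have hs2' : (1:ℝ) < Real.sqrt 2 := by
    nlinarith [Real.sqrt_nonneg 2]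
  set s : ℝ := Real.sqrt 2 with hs
  -- angle values
  have t0 : θv 0 = Real.pi / 4 := by simp [θv]
  have t1 : θv 1 = 3 * Real.pi / 4 := by simp [θv]
  have t2 : θv 2 = 5 * Real.pi / 4 := by simp [θv]
  have t3 : θv 3 = 7 * Real.pi / 4 := by simp [θv]
  have c0 : Real.cos (θv 0) = s / 2 := by rw [t0]; exact Real.cos_pi_div_four
  have x0 : Real.sin (θv 0) = s / 2 := by rw [t0]; exact Real.sin_pi_div_four
  have c1 : Real.cos (θv 1) = -(s / 2) := by
    rw [t1, show 3 * Real.pi / 4 = Real.pi - Real.pi / 4 by ring,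
      Real.cos_pi_sub, Real.cos_pi_div_four]
  have x1 : Real.sin (θv 1) = s / 2 := by
    rw [t1, show 3 * Real.pi / 4 = Real.pi - Real.pi / 4 by ring,
      Real.sin_pi_sub, Real.sin_pi_div_four]
  have c2 : Real.cos (θv 2) = -(s / 2) := by
    rw [t2, show 5 * Real.pi / 4 = Real.pi + Real.pi / 4 by ring,
      Real.cos_add, Real.cos_pi, Real.sin_pi, Real.cos_pi_div_four]; ring
  have x2 : Real.sin (θv 2) = -(s / 2) := by
    rw [t2, show 5 * Real.pi / 4 = Real.pi + Real.pi / 4 by ring,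
      Real.sin_add, Real.cos_pi, Real.sin_pi, Real.sin_pi_div_four]; ring
  have c3 : Real.cos (θv 3) = s / 2 := by
    rw [t3, show 7 * Real.pi / 4 = 2 * Real.pi - Real.pi / 4 by ring,
      Real.cos_sub, Real.cos_two_pi, Real.sin_two_pi, Real.cos_pi_div_four]; ring
  have x3 : Real.sin (θv 3) = -(s / 2) := by
    rw [t3, show 7 * Real.pi / 4 = 2 * Real.pi - Real.pi / 4 by ring,
      Real.sin_sub, Real.cos_two_pi, Real.sin_two_pi, Real.sin_pi_div_four]; ring
  -- Z statistics: cos(θ/2)^2 = 1/2 + cos θ / 2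
  have hcos_sq : ∀ i, Real.cos (θv i / 2) ^ 2 = 1 / 2 + Real.cos (θv i) / 2 := by
    intro i
    rw [Real.cos_sq]
    ring_nf
  have hZ0 : ∑ l : Fin n, μ 0 l * ξZ l = 1 / 2 + s / 4 := by
    rw [hZ 0, hcos_sq 0, c0]; ring
  have hZ1 : ∑ l : Fin n, μ 1 l * ξZ l = 1 / 2 - s / 4 := by
    rw [hZ 1, hcos_sq 1, c1]; ring
  have hZ2 : ∑ l : Fin n, μ 2 l * ξZ l = 1 / 2 - s / 4 := by
    rw [hZ 2, hcos_sq 2, c2]; ring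
  have hZ3 : ∑ l : Fin n, μ 3 l * ξZ l = 1 / 2 + s / 4 := by
    rw [hZ 3, hcos_sq 3, c3]; ring
  have hX0 : ∑ l : Fin n, μ 0 l * ξX l = 1 / 2 + s / 4 := by rw [hX 0, x0]; ring
  have hX1 : ∑ l : Fin n, μ 1 l * ξX l = 1 / 2 + s / 4 := by rw [hX 1, x1]; ring
  have hX2 : ∑ l : Fin n, μ 2 l * ξX l = 1 / 2 - s / 4 := by rw [hX 2, x2]; ring
  have hX3 : ∑ l : Fin n, μ 3 l * ξX l = 1 / 2 - s / 4 := by rw [hX 3, x3]; ring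
  -- four concentration bounds
  -- A = ξZ ξX, B = (1-ξZ)(1-ξX), C = (1-ξZ)ξX, D = ξZ(1-ξX)
  have hA : s / 2 ≤ ∑ l : Fin n, μ 0 l * (ξZ l * ξX l) := by
    have key : ∀ l : Fin n,
        μ 0 l * (ξZ l + ξX l - 1) ≤ μ 0 l * (ξZ l * ξX l) := by
      intro l
      apply mul_le_mul_of_nonneg_left _ (hpos 0 l)
      rcases hZ01 l with h | h <;> rcases hX01 l with h' | h' <;>
        rw [h, h'] <;> norm_num
    have := Finset.sum_le_sum (s := Finset.univ) (fun l _ => key l)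
    have expand : ∑ l : Fin n, μ 0 l * (ξZ l + ξX l - 1)
        = (∑ l : Fin n, μ 0 l * ξZ l) + (∑ l : Fin n, μ 0 l * ξX l)
          - ∑ l : Fin n, μ 0 l := by
      rw [← Finset.sum_add_distrib, ← Finset.sum_sub_distrib]
      exact Finset.sum_congr rfl fun l _ => by ring
    rw [expand, hZ0, hX0, hsum 0] at this
    linarith
  have hB : s / 2 ≤ ∑ l : Fin n, μ 2 l * ((1 - ξZ l) * (1 - ξX l)) := by
    have key : ∀ l : Fin n,
        μ 2 l * (1 - ξZ l - ξX l) ≤ μ 2 l * ((1 - ξZ l) * (1 - ξX l)) := by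
      intro l
      apply mul_le_mul_of_nonneg_left _ (hpos 2 l)
      rcases hZ01 l with h | h <;> rcases hX01 l with h' | h' <;>
        rw [h, h'] <;> norm_num
    have := Finset.sum_le_sum (s := Finset.univ) (fun l _ => key l)
    have expand : ∑ l : Fin n, μ 2 l * (1 - ξZ l - ξX l)
        = (∑ l : Fin n, μ 2 l) - (∑ l : Fin n, μ 2 l * ξZ l)
          - ∑ l : Fin n, μ 2 l * ξX l := by
      rw [← Finset.sum_sub_distrib, ← Finset.sum_sub_distrib]
      exact Finset.sum_congr rfl fun l _ => by ring
    rw [expand, hZ2, hX2, hsum 2] at this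
    linarith
  have hC : s / 2 ≤ ∑ l : Fin n, μ 1 l * ((1 - ξZ l) * ξX l) := by
    have key : ∀ l : Fin n,
        μ 1 l * (ξX l - ξZ l) ≤ μ 1 l * ((1 - ξZ l) * ξX l) := by
      intro l
      apply mul_le_mul_of_nonneg_left _ (hpos 1 l)
      rcases hZ01 l with h | h <;> rcases hX01 l with h' | h' <;>
        rw [h, h'] <;> norm_num
    have := Finset.sum_le_sum (s := Finset.univ) (fun l _ => key l)
    have expand : ∑ l : Fin n, μ 1 l * (ξX l - ξZ l)
        = (∑ l : Fin n, μ 1 l * ξX l) - ∑ l : Fin n, μ 1 l * ξZ l := by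
      rw [← Finset.sum_sub_distrib]
      exact Finset.sum_congr rfl fun l _ => by ring
    rw [expand, hZ1, hX1] at this
    linarith
  have hD : s / 2 ≤ ∑ l : Fin n, μ 3 l * (ξZ l * (1 - ξX l)) := by
    have key : ∀ l : Fin n,
        μ 3 l * (ξZ l - ξX l) ≤ μ 3 l * (ξZ l * (1 - ξX l)) := by
      intro l
      apply mul_le_mul_of_nonneg_left _ (hpos 3 l)
      rcases hZ01 l with h | h <;> rcases hX01 l with h' | h' <;>
        rw [h, h'] <;> norm_num
    have := Finset.sum_le_sum (s := Finset.univ) (fun l _ => key l)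
    have expand : ∑ l : Fin n, μ 3 l * (ξZ l - ξX l)
        = (∑ l : Fin n, μ 3 l * ξZ l) - ∑ l : Fin n, μ 3 l * ξX l := by
      rw [← Finset.sum_sub_distrib]
      exact Finset.sum_congr rfl fun l _ => by ring
    rw [expand, hZ3, hX3] at this
    linarith
  -- combine: pointwise, the four terms together are at most μ0 + μ2
  have hup : ∀ l : Fin n,
      μ 0 l * (ξZ l * ξX l) + μ 2 l * ((1 - ξZ l) * (1 - ξX l))
        + μ 1 l * ((1 - ξZ l) * ξX l) + μ 3 l * (ξZ l * (1 - ξX l))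
      ≤ μ 0 l + μ 2 l := by
    intro l
    have h13 : μ 1 l + μ 3 l = μ 0 l + μ 2 l := by linarith [hnc l]
    rcases hZ01 l with h | h <;> rcases hX01 l with h' | h' <;>
      rw [h, h'] <;>
      simp <;>
      linarith [hpos 0 l, hpos 1 l, hpos 2 l, hpos 3 l]
  have htot : ∑ l : Fin n,
      (μ 0 l * (ξZ l * ξX l) + μ 2 l * ((1 - ξZ l) * (1 - ξX l))
        + μ 1 l * ((1 - ξZ l) * ξX l) + μ 3 l * (ξZ l * (1 - ξX l)))
      ≤ 2 := by
    calc _ ≤ ∑ l : Fin n, (μ 0 l + μ 2 l) :=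
          Finset.sum_le_sum fun l _ => hup l
      _ = 2 := by rw [Finset.sum_add_distrib, hsum 0, hsum 2]; norm_num
  have hsplit : ∑ l : Fin n,
      (μ 0 l * (ξZ l * ξX l) + μ 2 l * ((1 - ξZ l) * (1 - ξX l))
        + μ 1 l * ((1 - ξZ l) * ξX l) + μ 3 l * (ξZ l * (1 - ξX l)))
      = (∑ l : Fin n, μ 0 l * (ξZ l * ξX l))
        + (∑ l : Fin n, μ 2 l * ((1 - ξZ l) * (1 - ξX l)))
        + (∑ l : Fin n, μ 1 l * ((1 - ξZ l) * ξX l))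
        + ∑ l : Fin n, μ 3 l * (ξZ l * (1 - ξX l)) := by
    simp [Finset.sum_add_distrib]
  rw [hsplit] at htot
  -- so 2 ≥ 4 * (s/2) = 2s > 2, contradiction
  nlinarith
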